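/- arXiv:1708.02677 — 2 statements merged into one kernel-verified Lean document; each statement's English description precedes it below -/
import Mathlib

section
/- Let G = (V, E) be a finite graph with |V| = n and maximum degree Δ, and let k ≥ Δ + 2. Then |C_sf(G,k)| ≤ k·n·|C_p(G,k)|, where C_p(G,k) is the set of proper k-colorings and C_sf(G,k) is the set of singly-flawed k-colorings of G. -/
/-- A `k`-coloring `σ` of `G` is proper if no edge is monochromatic. -/
def IsProper {V : Type*} {k : ℕ} (G : SimpleGraph V) (σ : V → Fin k) : Prop :=
  ∀ u v : V, G.Adj u v → σ u ≠ σ v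

/-- A `k`-coloring `σ` is singly-flawed if it has a monochromatic edge and
some vertex is incident to every monochromatic edge. -/
def IsSinglyFlawed {V : Type*} {k : ℕ} (G : SimpleGraph V) (σ : V → Fin k) : Prop :=
  (∃ u v : V, G.Adj u v ∧ σ u = σ v) ∧
  ∃ x : V, ∀ u v : V, G.Adj u v → σ u = σ v → x = u ∨ x = v

/-!
Recolour the vertex `x` covering all monochromatic edges of a singly-flawed colouring with a
colour missing from its at most `Δ < k` neighbours: the result is proper. The singly-flawed
colouring is recovered from the proper one, the vertex `x` and its old colour, so there are at
most `k · n` singly-flawed colourings per proper one.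
-/

open Function

theorem Nat.card_le_mul_card_of_forall_exists_update {V α : Type*} [Fintype V] [DecidableEq V]
    [Fintype α] {S P : (V → α) → Prop}
    (h : ∀ σ, S σ → ∃ x c, P (update σ x c)) :
    Nat.card {σ // S σ} ≤ Fintype.card α * Fintype.card V * Nat.card {σ // P σ} := by
  choose x c hc using h
  let f : {σ // S σ} → α × V × {σ // P σ} := fun σ =>
    (σ.1 (x σ.1 σ.2), x σ.1 σ.2, ⟨update σ.1 (x σ.1 σ.2) (c σ.1 σ.2), hc σ.1 σ.2⟩)
  have recover : ∀ σ : {σ // S σ}, σ.1 = update (f σ).2.2.1 (f σ).2.1 (f σ).1 := fun σ => by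
    simp only [f, update_idem, update_eq_self]
  have hf : Injective f := fun σ τ hστ => Subtype.ext <| by rw [recover σ, recover τ, hστ]
  calc Nat.card {σ // S σ} ≤ Nat.card (α × V × {σ // P σ}) := Nat.card_le_card_of_injective f hf
    _ = _ := by simp only [Nat.card_prod, Nat.card_eq_fintype_card, mul_assoc]

theorem exists_ne_forall_adj_of_degree_lt {V : Type*} (G : SimpleGraph V) [Fintype V]
    [DecidableRel G.Adj] {k : ℕ} (σ : V → Fin k) (x : V) (hx : G.degree x < k) :
    ∃ c, ∀ v, G.Adj x v → σ v ≠ c := by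
  classical
  have hlt : ((G.neighborFinset x).image σ).card < (Finset.univ : Finset (Fin k)).card := by
    calc _ ≤ G.degree x := Finset.card_image_le
      _ < _ := by rwa [Finset.card_fin]
  obtain ⟨c, -, hc⟩ := Finset.exists_mem_notMem_of_card_lt_card hlt
  exact ⟨c, fun v hv hvc => hc (Finset.mem_image.2 ⟨v, by simpa using hv, hvc⟩)⟩

theorem isProper_update {V : Type*} [DecidableEq V] {k : ℕ} (G : SimpleGraph V)
    (σ : V → Fin k) {x : V} (hx : ∀ u v, G.Adj u v → σ u = σ v → x = u ∨ x = v) {c : Fin k}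
    (hc : ∀ v, G.Adj x v → σ v ≠ c) :
    IsProper G (update σ x c) := by
  intro u v huv
  rcases eq_or_ne u x with rfl | hu
  · rw [update_self, update_of_ne (G.ne_of_adj huv).symm]
    exact (hc v huv).symm
  rcases eq_or_ne v x with rfl | hv
  · rw [update_self, update_of_ne hu]
    exact hc u huv.symm
  rw [update_of_ne hu, update_of_ne hv]
  exact fun hσ => (hx u v huv hσ).elim (fun h => hu h.symm) (fun h => hv h.symm)

theorem stmt_1 {V : Type*} [Fintype V] (G : SimpleGraph V) [DecidableRel G.Adj]
    (k : ℕ) (hk : G.maxDegree + 2 ≤ k) :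
    Nat.card {σ : V → Fin k // IsSinglyFlawed G σ} ≤
      k * Fintype.card V * Nat.card {σ : V → Fin k // IsProper G σ} := by
  classical
  have recolour : ∀ σ : V → Fin k, IsSinglyFlawed G σ → ∃ x c, IsProper G (update σ x c) := by
    rintro σ ⟨-, x, hx⟩
    have hdeg : G.degree x < k := by have := G.degree_le_maxDegree x; omega
    obtain ⟨c, hc⟩ := exists_ne_forall_adj_of_degree_lt G σ x hdeg
    exact ⟨x, c, isProper_update G σ hx hc⟩
  simpa using Nat.card_le_mul_card_of_forall_exists_update recolour
end

section
/- Let G = (V,E) be a finite graph with maximum degree Δ and k ≥ Δ + 2, and let Ω = C_p(G,k) ∪ C_sf(G,k). If π is the uniform distribution on Ω, then π(C_p(G,k)) ≥ 1/(k·|V| + 1). -/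
namespace SimpleGraph

variable {V : Type*} {G : SimpleGraph V} {k : ℕ}

lemma exists_color_ne_of_adj [Fintype V] [DecidableRel G.Adj] (hk : G.maxDegree < k)
    (σ : V → Fin k) (x : V) : ∃ c : Fin k, ∀ v, G.Adj x v → c ≠ σ v := by
  have hcard : ((G.neighborFinset x).image σ).card < (Finset.univ : Finset (Fin k)).card :=
    calc ((G.neighborFinset x).image σ).card
        ≤ G.degree x := Finset.card_image_le
      _ ≤ G.maxDegree := G.degree_le_maxDegree x
      _ < (Finset.univ : Finset (Fin k)).card := by simpa using hk
  obtain ⟨c, -, hc⟩ := Finset.exists_mem_notMem_of_card_lt_card hcard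
  exact ⟨c, fun v hv hcv => hc (Finset.mem_image.2 ⟨v, (G.mem_neighborFinset x v).2 hv, hcv.symm⟩)⟩

section Update

variable [DecidableEq V]

lemma eq_and_ne_of_update_eq_update {σ : V → Fin k} {x u v : V} {c : Fin k}
    (hc : ∀ v, G.Adj x v → c ≠ σ v) (huv : G.Adj u v)
    (h : Function.update σ x c u = Function.update σ x c v) : σ u = σ v ∧ u ≠ x ∧ v ≠ x := by
  by_cases hu : u = x
  · subst hu
    rw [Function.update_self, Function.update_of_ne (G.ne_of_adj huv).symm] at h
    exact absurd h (hc v huv)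
  by_cases hv : v = x
  · subst hv
    rw [Function.update_self, Function.update_of_ne hu] at h
    exact absurd h.symm (hc u huv.symm)
  rw [Function.update_of_ne hu, Function.update_of_ne hv] at h
  exact ⟨h, hu, hv⟩

lemma isProper_update {σ : V → Fin k} {x : V} {c : Fin k}
    (hσ : ∀ u v, G.Adj u v → σ u = σ v → x = u ∨ x = v) (hc : ∀ v, G.Adj x v → c ≠ σ v) :
    IsProper G (Function.update σ x c) := by
  intro u v huv h
  obtain ⟨heq, hu, hv⟩ := eq_and_ne_of_update_eq_update hc huv h
  rcases hσ u v huv heq with rfl | rfl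
  exacts [hu rfl, hv rfl]

end Update

variable [Fintype V] [DecidableRel G.Adj]

lemma exists_isProper (hk : G.maxDegree < k) : ∃ σ : V → Fin k, IsProper G σ := by
  classical
  suffices ∀ s : Finset V, ∃ σ : V → Fin k, ∀ u v, G.Adj u v → σ u = σ v → u ∉ s by
    obtain ⟨σ, hσ⟩ := this Finset.univ
    exact ⟨σ, fun u v huv h => hσ u v huv h (Finset.mem_univ u)⟩
  intro s
  induction s using Finset.induction_on with
  | empty => exact ⟨fun _ => ⟨0, by omega⟩, fun _ _ _ _ => Finset.notMem_empty _⟩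
  | insert x s _ ih =>
    obtain ⟨σ, hσ⟩ := ih
    obtain ⟨c, hc⟩ := exists_color_ne_of_adj hk σ x
    refine ⟨Function.update σ x c, fun u v huv h => ?_⟩
    obtain ⟨heq, hu, -⟩ := eq_and_ne_of_update_eq_update hc huv h
    simpa [hu] using hσ u v huv heq

lemma card_isSinglyFlawed_le (hk : G.maxDegree < k) :
    Nat.card {σ : V → Fin k | IsSinglyFlawed G σ} ≤
      Fintype.card V * (k * Nat.card {σ : V → Fin k | IsProper G σ}) := by
  classical
  let recolor (p : V × Fin k × {τ : V → Fin k // IsProper G τ}) : V → Fin k :=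
    Function.update p.2.2.1 p.1 p.2.1
  have hsub : {σ : V → Fin k | IsSinglyFlawed G σ} ⊆ Set.range recolor := by
    rintro σ ⟨-, x, hx⟩
    obtain ⟨c, hc⟩ := exists_color_ne_of_adj hk σ x
    refine ⟨⟨x, σ x, Function.update σ x c, isProper_update hx hc⟩, ?_⟩
    simp [recolor]
  calc Nat.card {σ : V → Fin k | IsSinglyFlawed G σ}
      ≤ Nat.card (Set.range recolor) := Nat.card_mono (Set.toFinite _) hsub
    _ ≤ Nat.card (V × Fin k × {τ : V → Fin k // IsProper G τ}) := Finite.card_range_le recolor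
    _ = Fintype.card V * (k * Nat.card {σ : V → Fin k | IsProper G σ}) := by
      rw [Nat.card_prod, Nat.card_prod, Nat.card_eq_fintype_card (α := V), Nat.card_fin]
      rfl

end SimpleGraph

open SimpleGraph in
theorem stmt_16 {V : Type*} [Fintype V] (G : SimpleGraph V) [DecidableRel G.Adj]
    (k : ℕ) (hk : G.maxDegree + 2 ≤ k) :
    ((k * Fintype.card V + 1 : ℕ) : ℝ)⁻¹ ≤
      (Nat.card {σ : V → Fin k | IsProper G σ} : ℝ) /
        (Nat.card {σ : V → Fin k | IsProper G σ ∨ IsSinglyFlawed G σ} : ℝ) := by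
  classical
  have hΔ : G.maxDegree < k := by omega
  set P := Nat.card {σ : V → Fin k | IsProper G σ}
  set S := Nat.card {σ : V → Fin k | IsProper G σ ∨ IsSinglyFlawed G σ}
  have hP : 0 < P := by
    obtain ⟨σ, hσ⟩ := exists_isProper hΔ
    exact Nat.card_pos_iff.2 ⟨⟨⟨σ, hσ⟩⟩, inferInstance⟩
  have hPS : P ≤ S := Nat.card_mono (Set.toFinite _) fun σ => Or.inl
  have hS : S ≤ (k * Fintype.card V + 1) * P := by
    have hunion : S ≤ P + Nat.card {σ : V → Fin k | IsSinglyFlawed G σ} := by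
      simp only [S, P, Set.ofPred_or, Nat.card_coe_set_eq]
      exact Set.ncard_union_le _ _
    have := card_isSinglyFlawed_le hΔ
    nlinarith
  rw [le_div_iff₀ (by exact_mod_cast hP.trans_le hPS), inv_mul_le_iff₀ (by positivity)]
  exact_mod_cast hS
end
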